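/- Let (wₙ) be a sequence of pairwise disjointly supported vectors in ℓ₂ with δ < ‖wₙ‖₂ ≤ 1 for some δ > 0, and let ψ : [0,∞) → ℝ be bi-Lipschitz with lower constant b > 0 and ψ(0) = 0. Then for every N, Σ_{n=1}^N ‖wₙ‖₂² · |ψ(log(‖Σ_{j=1}^N w_j‖₂ / ‖wₙ‖₂))|² ≥ b²·N·δ²·(log(δ√N))² for N large enough that δ√N > 1. In particular, (1/N)·Σ_{n=1}^N ‖wₙ‖₂²·|ψ(log(‖Σⱼwⱼ‖₂/‖wₙ‖₂))|² → ∞ as N → ∞. -/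

import Mathlib

/-! Disjointness makes `‖∑ⱼ wⱼ‖₂² = ∑ⱼ ‖wⱼ‖₂² > N δ²`, and since `‖wₙ‖₂ ≤ 1` every ratio
`‖∑ⱼ wⱼ‖₂ / ‖wₙ‖₂` is at least `δ √N`. The lower Lipschitz bound together with `ψ 0 = 0`
gives `|ψ s| ≥ b s` for `s ≥ 0`, so each of the `N` summands is at least
`δ² b² (log (δ √N))²`. Dividing by `N` leaves a quantity that grows like `(log N)²`. -/

open Real

/-- The ℓ₂ norm of a finitely supported sequence. -/
noncomputable def l2 (x : ℕ →₀ ℝ) : ℝ :=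
  Real.sqrt (∑ n ∈ x.support, (x n) ^ 2)

/-- The Kalton–Peck type quasi-linear map `Ω_φ(x) = ∑ₙ xₙ φ(log(‖x‖₂/|xₙ|)) eₙ` on `c₀₀`. -/
noncomputable def Omega (φ : ℝ → ℝ) (x : ℕ →₀ ℝ) : ℕ →₀ ℝ :=
  Finsupp.onFinset x.support
    (fun n => x n * φ (Real.log (l2 x / |x n|)))
    (fun n h => Finsupp.mem_support_iff.2 (left_ne_zero_of_mul h))

lemma l2_nonneg (x : ℕ →₀ ℝ) : 0 ≤ l2 x := Real.sqrt_nonneg _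

lemma l2_sq (x : ℕ →₀ ℝ) : l2 x ^ 2 = ∑ n ∈ x.support, x n ^ 2 :=
  Real.sq_sqrt (Finset.sum_nonneg fun _ _ => sq_nonneg _)

section DisjointSupports

variable {ι : Type*} {w : ι → ℕ →₀ ℝ}

lemma l2_sum_sq_of_disjoint (hdisj : ∀ i j, i ≠ j → Disjoint (w i).support (w j).support)
    (S : Finset ι) : l2 (∑ j ∈ S, w j) ^ 2 = ∑ j ∈ S, l2 (w j) ^ 2 := by
  classical
  rw [l2_sq, Finsupp.support_sum_eq_biUnion S hdisj,
    Finset.sum_biUnion fun i _ j _ hij => hdisj i j hij]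
  refine Finset.sum_congr rfl fun j hj => ?_
  rw [l2_sq]
  refine Finset.sum_congr rfl fun n hn => ?_
  rw [Finset.sum_apply', Finset.sum_eq_single_of_mem j hj]
  intro i _ hij
  exact Finsupp.notMem_support_iff.1 (Finset.disjoint_left.mp (hdisj j i hij.symm) hn)

lemma mul_sqrt_card_le_l2_sum (hdisj : ∀ i j, i ≠ j → Disjoint (w i).support (w j).support)
    {δ : ℝ} (hδ : 0 ≤ δ) {S : Finset ι} (hlow : ∀ j ∈ S, δ ≤ l2 (w j)) :
    δ * √(S.card : ℝ) ≤ l2 (∑ j ∈ S, w j) := by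
  have hsq : (δ * √(S.card : ℝ)) ^ 2 ≤ l2 (∑ j ∈ S, w j) ^ 2 := by
    rw [l2_sum_sq_of_disjoint hdisj, mul_pow, Real.sq_sqrt (Nat.cast_nonneg _), mul_comm,
      ← nsmul_eq_mul, ← Finset.sum_const]
    exact Finset.sum_le_sum fun j hj => pow_le_pow_left₀ hδ (hlow j hj) 2
  exact (pow_le_pow_iff_left₀ (by positivity) (l2_nonneg _) two_ne_zero).1 hsq

end DisjointSupports

section LowerLipschitz

variable {ψ : ℝ → ℝ} {b : ℝ}

lemma mul_le_abs_of_lowerLipschitz (hψ0 : ψ 0 = 0)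
    (hbi : ∀ s ∈ Set.Ici (0:ℝ), ∀ t ∈ Set.Ici (0:ℝ), b * |s - t| ≤ |ψ s - ψ t|)
    {s : ℝ} (hs : 0 ≤ s) : b * s ≤ |ψ s| := by
  simpa [hψ0, abs_of_nonneg hs] using hbi s hs 0 Set.self_mem_Ici

lemma sq_mul_sq_log_le_sq_apply_log (hb : 0 ≤ b) (hψ0 : ψ 0 = 0)
    (hbi : ∀ s ∈ Set.Ici (0:ℝ), ∀ t ∈ Set.Ici (0:ℝ), b * |s - t| ≤ |ψ s - ψ t|)
    {c y : ℝ} (hc : 1 ≤ c) (hcy : c ≤ y) : b ^ 2 * log c ^ 2 ≤ ψ (log y) ^ 2 := by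
  have hlogc : 0 ≤ log c := log_nonneg hc
  have hlog : log c ≤ log y := log_le_log (by linarith) hcy
  calc b ^ 2 * log c ^ 2 = (b * log c) ^ 2 := by ring
    _ ≤ (b * log y) ^ 2 := pow_le_pow_left₀ (mul_nonneg hb hlogc) (by gcongr) 2
    _ ≤ |ψ (log y)| ^ 2 :=
        pow_le_pow_left₀ (mul_nonneg hb (hlogc.trans hlog))
          (mul_le_abs_of_lowerLipschitz hψ0 hbi (hlogc.trans hlog)) 2
    _ = ψ (log y) ^ 2 := sq_abs _

end LowerLipschitz

lemma card_mul_sq_log_le_sum_l2_sq_mul_sq {ι : Type*} {w : ι → ℕ →₀ ℝ}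
    (hdisj : ∀ i j, i ≠ j → Disjoint (w i).support (w j).support)
    {S : Finset ι} {δ : ℝ} (hlow : ∀ n ∈ S, δ ≤ l2 (w n))
    (hup : ∀ n ∈ S, l2 (w n) ≤ 1) {ψ : ℝ → ℝ} {b : ℝ} (hb : 0 ≤ b) (hψ0 : ψ 0 = 0)
    (hbi : ∀ s ∈ Set.Ici (0:ℝ), ∀ t ∈ Set.Ici (0:ℝ), b * |s - t| ≤ |ψ s - ψ t|)
    (hS : 1 ≤ δ * √(S.card : ℝ)) :
    b ^ 2 * S.card * δ ^ 2 * log (δ * √(S.card : ℝ)) ^ 2 ≤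
      ∑ n ∈ S, l2 (w n) ^ 2 * ψ (log (l2 (∑ j ∈ S, w j) / l2 (w n))) ^ 2 := by
  have hδ : 0 < δ := pos_of_mul_pos_left (one_pos.trans_le hS) (Real.sqrt_nonneg _)
  set L := l2 (∑ j ∈ S, w j)
  have hL : δ * √(S.card : ℝ) ≤ L := mul_sqrt_card_le_l2_sum hdisj hδ.le hlow
  have hterm : ∀ n ∈ S, δ ^ 2 * (b ^ 2 * log (δ * √(S.card : ℝ)) ^ 2) ≤
      l2 (w n) ^ 2 * ψ (log (L / l2 (w n))) ^ 2 := by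
    intro n hn
    have hwpos : 0 < l2 (w n) := hδ.trans_le (hlow n hn)
    have hratio : L ≤ L / l2 (w n) := le_div_self (l2_nonneg _) hwpos (hup n hn)
    exact mul_le_mul (pow_le_pow_left₀ hδ.le (hlow n hn) 2)
      (sq_mul_sq_log_le_sq_apply_log hb hψ0 hbi hS (hL.trans hratio))
      (by positivity) (sq_nonneg _)
  calc b ^ 2 * S.card * δ ^ 2 * log (δ * √(S.card : ℝ)) ^ 2
      = ∑ _n ∈ S, δ ^ 2 * (b ^ 2 * log (δ * √(S.card : ℝ)) ^ 2) := by
        rw [Finset.sum_const, nsmul_eq_mul]; ring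
    _ ≤ _ := Finset.sum_le_sum hterm

theorem stmt17 (w : ℕ → (ℕ →₀ ℝ)) (δ : ℝ) (hδ : 0 < δ)
    (hdisj : ∀ i j, i ≠ j → Disjoint (w i).support (w j).support)
    (hlow : ∀ n, δ < l2 (w n)) (hup : ∀ n, l2 (w n) ≤ 1)
    (ψ : ℝ → ℝ) (b : ℝ) (hb : 0 < b) (hψ0 : ψ 0 = 0)
    (hbi : ∀ s ∈ Set.Ici (0:ℝ), ∀ t ∈ Set.Ici (0:ℝ), b * |s - t| ≤ |ψ s - ψ t|) :
    (∀ N : ℕ, 1 < δ * Real.sqrt N →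
      b ^ 2 * N * δ ^ 2 * (Real.log (δ * Real.sqrt N)) ^ 2 ≤
        ∑ n ∈ Finset.range N, (l2 (w n)) ^ 2 *
          (ψ (Real.log (l2 (∑ j ∈ Finset.range N, w j) / l2 (w n)))) ^ 2) ∧
    Filter.Tendsto (fun N : ℕ => (1 / (N : ℝ)) *
        ∑ n ∈ Finset.range N, (l2 (w n)) ^ 2 *
          (ψ (Real.log (l2 (∑ j ∈ Finset.range N, w j) / l2 (w n)))) ^ 2)
      Filter.atTop Filter.atTop := by
  have hbound : ∀ N : ℕ, 1 < δ * √(N : ℝ) →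
      b ^ 2 * N * δ ^ 2 * log (δ * √(N : ℝ)) ^ 2 ≤
        ∑ n ∈ Finset.range N, l2 (w n) ^ 2 *
          ψ (log (l2 (∑ j ∈ Finset.range N, w j) / l2 (w n))) ^ 2 := by
    intro N hN
    simpa using card_mul_sq_log_le_sum_l2_sq_mul_sq (S := Finset.range N) hdisj
      (fun n _ => (hlow n).le) (fun n _ => hup n) hb.le hψ0 hbi (by simpa using hN.le)
  refine ⟨hbound, ?_⟩
  have hδN : Filter.Tendsto (fun N : ℕ => δ * √(N : ℝ)) Filter.atTop Filter.atTop :=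
    (tendsto_sqrt_atTop.comp tendsto_natCast_atTop_atTop).const_mul_atTop hδ
  have hlog : Filter.Tendsto (fun N : ℕ => b ^ 2 * δ ^ 2 * log (δ * √(N : ℝ)) ^ 2)
      Filter.atTop Filter.atTop :=
    ((Filter.tendsto_pow_atTop two_ne_zero).comp (tendsto_log_atTop.comp hδN)).const_mul_atTop
      (by positivity)
  refine Filter.tendsto_atTop_mono' _ ?_ hlog
  filter_upwards [hδN.eventually_gt_atTop 1, Filter.eventually_gt_atTop 0] with N hN hN0
  have hNpos : (0 : ℝ) < N := Nat.cast_pos.2 hN0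
  calc b ^ 2 * δ ^ 2 * log (δ * √(N : ℝ)) ^ 2
      = 1 / (N : ℝ) * (b ^ 2 * N * δ ^ 2 * log (δ * √(N : ℝ)) ^ 2) := by field_simp
    _ ≤ _ := mul_le_mul_of_nonneg_left (hbound N hN) (by positivity)
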